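/- Let X, Y, W be real numbers and W' = π − W. Then sin X · sin(W'/2) · sin(Y/2) · sin((Y − W')/2) + sin Y · sin(W/2) · sin(X/2) · sin((X − W)/2) + sin W · cos(X/2) · cos(Y/2) · sin((X + Y)/2) − 2 sin²(X/2) cos²(W/2) cos²(Y/2) − 2 cos²(X/2) cos²(W'/2) sin²(Y/2) = 2 sin((W' − Y)/2) sin((W − X)/2) sin((X + Y)/2). -/

import Mathlib

/-
With x = X/2, y = Y/2, w = W/2 the complement W' turns sines of W'/2 into cosines of w and back,
and after expanding the double and sum angles both sides become the same polynomial in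
sin x, cos x, sin y, cos y, sin w, cos w; not even sin² + cos² = 1 is needed.
-/

open Real in
theorem half_angle_factorization (x y w : ℝ) :
    sin (2 * x) * cos w * sin y * -cos (w + y)
      + sin (2 * y) * sin w * sin x * sin (x - w)
      + sin (2 * w) * cos x * cos y * sin (x + y)
      - 2 * sin x ^ 2 * cos w ^ 2 * cos y ^ 2
      - 2 * cos x ^ 2 * sin w ^ 2 * sin y ^ 2
    = 2 * cos (w + y) * sin (w - x) * sin (x + y) := by
  simp only [sin_two_mul, sin_add, cos_add, sin_sub]
  ring

open Real in
theorem sin_pi_sub_div_two (W : ℝ) : sin ((π - W) / 2) = cos (W / 2) := by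
  rw [← sin_pi_div_two_sub]; ring_nf

open Real in
theorem cos_pi_sub_div_two (W : ℝ) : cos ((π - W) / 2) = sin (W / 2) := by
  rw [← cos_pi_div_two_sub]; ring_nf

theorem stmt5 (X Y W : ℝ) (W' : ℝ) (hW' : W' = Real.pi - W) :
    Real.sin X * Real.sin (W' / 2) * Real.sin (Y / 2) * Real.sin ((Y - W') / 2)
      + Real.sin Y * Real.sin (W / 2) * Real.sin (X / 2) * Real.sin ((X - W) / 2)
      + Real.sin W * Real.cos (X / 2) * Real.cos (Y / 2) * Real.sin ((X + Y) / 2)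
      - 2 * Real.sin (X / 2) ^ 2 * Real.cos (W / 2) ^ 2 * Real.cos (Y / 2) ^ 2
      - 2 * Real.cos (X / 2) ^ 2 * Real.cos (W' / 2) ^ 2 * Real.sin (Y / 2) ^ 2
    = 2 * Real.sin ((W' - Y) / 2) * Real.sin ((W - X) / 2) * Real.sin ((X + Y) / 2) := by
  subst hW'
  have key := half_angle_factorization (X / 2) (Y / 2) (W / 2)
  simp only [mul_div_cancel₀ _ (two_ne_zero (α := ℝ))] at key
  rw [show (Y - (Real.pi - W)) / 2 = -((Real.pi - (W + Y)) / 2) by ring,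
    show (Real.pi - W - Y) / 2 = (Real.pi - (W + Y)) / 2 by ring, Real.sin_neg,
    sin_pi_sub_div_two, sin_pi_sub_div_two, cos_pi_sub_div_two, add_div W, sub_div X, sub_div W, add_div X]
  exact key
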